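/- Define S₁ = K₁ and Sₙ = s(Sₙ₋₁) (the s-claw substitution of Sₙ₋₁) for n ≥ 2. Then α-pw(Sₙ) = n for every positive integer n. -/
import Mathlib


namespace Awesome

open SimpleGraph

/-- Independence number of the subgraph of `G` induced by `S`. -/
noncomputable def indepNumOn {V : Type*} (G : SimpleGraph V) (S : Set V) : ℕ :=
  sSup {k | ∃ T : Finset V, ↑T ⊆ S ∧ (∀ u ∈ T, ∀ v ∈ T, ¬ G.Adj u v) ∧ T.card = k}

/-- `H` is isomorphic to an induced subgraph of `G`. -/
def ContainsInduced {W V : Type*} (H : SimpleGraph W) (G : SimpleGraph V) : Prop :=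
  ∃ S : Set V, Nonempty (H ≃g G.induce S)

/-- A path decomposition of `G`: a sequence of bags covering all vertices and edges,
with each vertex appearing in a contiguous interval of bags. -/
structure PathDecomp {V : Type*} (G : SimpleGraph V) where
  n : ℕ
  bag : Fin n → Set V
  covers_vertex : ∀ v, ∃ i, v ∈ bag i
  covers_edge : ∀ ⦃u v⦄, G.Adj u v → ∃ i, u ∈ bag i ∧ v ∈ bag i
  interval : ∀ (v : V) (i j k : Fin n), i ≤ j → j ≤ k → v ∈ bag i → v ∈ bag k → v ∈ bag j

/-- Width of a path decomposition: the maximum bag size. -/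
noncomputable def PathDecomp.width {V : Type*} {G : SimpleGraph V} (D : PathDecomp G) : ℕ :=
  Finset.univ.sup fun i => (D.bag i).ncard

/-- α-width of a path decomposition: the maximum independence number of a bag. -/
noncomputable def PathDecomp.alphaWidth {V : Type*} {G : SimpleGraph V} (D : PathDecomp G) : ℕ :=
  Finset.univ.sup fun i => indepNumOn G (D.bag i)

/-- Pathwidth (defined as maximum bag size, i.e. the usual pathwidth plus one). -/
noncomputable def pathwidth {V : Type*} (G : SimpleGraph V) : ℕ :=
  sInf {w | ∃ D : PathDecomp G, D.width = w}

/-- α-pathwidth (path-independence number). -/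
noncomputable def alphaPathwidth {V : Type*} (G : SimpleGraph V) : ℕ :=
  sInf {w | ∃ D : PathDecomp G, D.alphaWidth = w}

/-- A tree decomposition of `G`. -/
structure TreeDecomp {V : Type*} (G : SimpleGraph V) where
  ι : Type
  fintype_ι : Fintype ι
  T : SimpleGraph ι
  connected : T.Connected
  acyclic : T.IsAcyclic
  bag : ι → Set V
  covers_vertex : ∀ v, ∃ i, v ∈ bag i
  covers_edge : ∀ ⦃u v⦄, G.Adj u v → ∃ i, u ∈ bag i ∧ v ∈ bag i
  coherent : ∀ v : V, (T.induce {i | v ∈ bag i}).Connected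

/-- Width of a tree decomposition: maximum bag size. -/
noncomputable def TreeDecomp.width {V : Type*} {G : SimpleGraph V} (D : TreeDecomp G) : ℕ :=
  letI := D.fintype_ι
  Finset.univ.sup fun i => (D.bag i).ncard

/-- α-width of a tree decomposition: maximum independence number of a bag. -/
noncomputable def TreeDecomp.alphaWidth {V : Type*} {G : SimpleGraph V} (D : TreeDecomp G) : ℕ :=
  letI := D.fintype_ι
  Finset.univ.sup fun i => indepNumOn G (D.bag i)

/-- Treewidth (defined as maximum bag size, i.e. the usual treewidth plus one). -/
noncomputable def treewidth {V : Type*} (G : SimpleGraph V) : ℕ :=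
  sInf {w | ∃ D : TreeDecomp G, D.width = w}

/-- α-treewidth (tree-independence number). -/
noncomputable def alphaTreewidth {V : Type*} (G : SimpleGraph V) : ℕ :=
  sInf {w | ∃ D : TreeDecomp G, D.alphaWidth = w}

/-- A treedepth decomposition of `G`, encoded as a forest order: a partial order in which
the set of ancestors of every vertex is a chain, and every edge of `G` joins two
comparable vertices. -/
structure TreedepthDecomp {V : Type*} (G : SimpleGraph V) where
  le : V → V → Prop
  le_refl : ∀ v, le v v
  le_trans : ∀ {u v w}, le u v → le v w → le u w
  le_antisymm : ∀ {u v}, le u v → le v u → u = v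
  ancestors_chain : ∀ (v : V) {a b : V}, le a v → le b v → le a b ∨ le b a
  covers : ∀ ⦃u v⦄, G.Adj u v → le u v ∨ le v u

/-- Depth of a treedepth decomposition: the maximum number of vertices on a
root-to-leaf path, i.e. the maximum number of ancestors of a vertex (itself included). -/
noncomputable def TreedepthDecomp.depth {V : Type*} {G : SimpleGraph V}
    (D : TreedepthDecomp G) : ℕ :=
  ⨆ v : V, ({u | D.le u v} : Set V).ncard

/-- Treedepth. -/
noncomputable def treedepth {V : Type*} (G : SimpleGraph V) : ℕ :=
  sInf {d | ∃ D : TreedepthDecomp G, D.depth = d}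

/-- A vertex cover. -/
def IsVertexCover {V : Type*} (G : SimpleGraph V) (S : Set V) : Prop :=
  ∀ ⦃u v⦄, G.Adj u v → u ∈ S ∨ v ∈ S

/-- Vertex cover number. -/
noncomputable def vcNum {V : Type*} (G : SimpleGraph V) : ℕ :=
  sInf {k | ∃ S : Set V, IsVertexCover G S ∧ S.ncard = k}

/-- Every graph on `n` vertices has a clique of size `a` or an independent set of size `b`. -/
def RamseyProp (n a b : ℕ) : Prop :=
  ∀ G : SimpleGraph (Fin n),
    (∃ s : Finset (Fin n), G.IsNClique a s) ∨ (∃ s : Finset (Fin n), Gᶜ.IsNClique b s)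

/-- The Ramsey number `R(a,b)`: the least `n` such that every graph on at least `n`
vertices contains a clique of size `a` or an independent set of size `b`. -/
noncomputable def ramsey (a b : ℕ) : ℕ :=
  sInf {n | ∀ m, n ≤ m → RamseyProp m a b}

/-- The s-claw substitution of `G`: three disjoint copies of `G`, vertices `v₁ v₂ v₃`
(each complete to one copy), and a vertex `w` adjacent exactly to `v₁, v₂, v₃`. -/
def sClaw {V : Type*} (G : SimpleGraph V) :
    SimpleGraph ((Fin 3 × V) ⊕ (Fin 3 ⊕ Unit)) :=
  SimpleGraph.fromRel fun a b =>
    match a, b with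
    | Sum.inl (i, u), Sum.inl (j, v) => i = j ∧ G.Adj u v
    | Sum.inl (i, _), Sum.inr (Sum.inl j) => i = j
    | Sum.inr (Sum.inl _), Sum.inr (Sum.inr _) => True
    | _, _ => False

/-- Vertex type of the iterated s-claw substitution sequence. -/
def SType : ℕ → Type
  | 0 => Unit
  | n + 1 => (Fin 3 × SType n) ⊕ (Fin 3 ⊕ Unit)

/-- `Sgraph 0 = K₁` and `Sgraph (n+1) = sClaw (Sgraph n)`; so the paper's `Sₙ` is `Sgraph (n-1)`. -/
def Sgraph : (n : ℕ) → SimpleGraph (SType n)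
  | 0 => ⊥
  | n + 1 => sClaw (Sgraph n)

/-- A graph parameter: a map assigning a natural number to every graph. -/
abbrev GraphParam := ∀ {V : Type}, SimpleGraph V → ℕ

/-- `S` is a `(ρ,c)`-modulator of `G`: `ρ (G − S) ≤ c`. -/
def IsModulator (ρ : GraphParam) (c : ℕ) {V : Type} (G : SimpleGraph V) (S : Set V) : Prop :=
  ρ (G.induce Sᶜ) ≤ c

/-- The `(ρ,c)`-modulator number: minimum size of a `(ρ,c)`-modulator. -/
noncomputable def modNum (ρ : GraphParam) (c : ℕ) {V : Type} (G : SimpleGraph V) : ℕ :=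
  sInf {k | ∃ S : Set V, IsModulator ρ c G S ∧ S.ncard = k}

/-- The disjoint union of `n` edges. -/
def nK2 (n : ℕ) : SimpleGraph (Fin n × Fin 2) :=
  SimpleGraph.fromRel fun a b => a.1 = b.1 ∧ a.2 ≠ b.2

/-- The disjoint union of `k` copies of the complete graph on `N` vertices. -/
def unionComplete (k N : ℕ) : SimpleGraph (Fin k × Fin N) :=
  SimpleGraph.fromRel fun a b => a.1 = b.1

section AuxBasic

instance sTypeFintype : ∀ n, Fintype (SType n)
  | 0 => inferInstanceAs (Fintype Unit)
  | n + 1 =>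
      letI := sTypeFintype n
      inferInstanceAs (Fintype ((Fin 3 × SType n) ⊕ (Fin 3 ⊕ Unit)))

instance sTypeNonempty : ∀ n, Nonempty (SType n)
  | 0 => ⟨()⟩
  | _ + 1 => ⟨Sum.inr (Sum.inr ())⟩

lemma indepNumOn_le {V : Type*} {G : SimpleGraph V} {S : Set V} {m : ℕ}
    (h : ∀ T : Finset V, ↑T ⊆ S → (∀ u ∈ T, ∀ v ∈ T, ¬ G.Adj u v) → T.card ≤ m) :
    indepNumOn G S ≤ m := by
  refine csSup_le ⟨0, ⟨∅, by simp⟩⟩ ?_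
  rintro k ⟨T, h1, h2, rfl⟩
  exact h T h1 h2

lemma indepNumOn_bddAbove {V : Type*} [Fintype V] (G : SimpleGraph V) (S : Set V) :
    BddAbove {k | ∃ T : Finset V, ↑T ⊆ S ∧ (∀ u ∈ T, ∀ v ∈ T, ¬ G.Adj u v) ∧ T.card = k} := by
  refine ⟨Fintype.card V, ?_⟩
  rintro k ⟨T, _, _, rfl⟩
  exact (Finset.card_le_univ T).trans (le_of_eq (Finset.card_univ))

lemma le_indepNumOn {V : Type*} [Fintype V] {G : SimpleGraph V} {S : Set V}
    (T : Finset V) (h1 : ↑T ⊆ S) (h2 : ∀ u ∈ T, ∀ v ∈ T, ¬ G.Adj u v) :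
    T.card ≤ indepNumOn G S :=
  le_csSup (indepNumOn_bddAbove G S) ⟨T, h1, h2, rfl⟩

lemma exists_indep_of_le {V : Type*} [Fintype V] {G : SimpleGraph V} {S : Set V} {k : ℕ}
    (h : k ≤ indepNumOn G S) :
    ∃ T : Finset V, ↑T ⊆ S ∧ (∀ u ∈ T, ∀ v ∈ T, ¬ G.Adj u v) ∧ k ≤ T.card := by
  have hmem := Nat.sSup_mem (s := {k | ∃ T : Finset V, ↑T ⊆ S ∧
      (∀ u ∈ T, ∀ v ∈ T, ¬ G.Adj u v) ∧ T.card = k}) ⟨0, ⟨∅, by simp⟩⟩ (indepNumOn_bddAbove G S)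
  obtain ⟨T, h1, h2, hc⟩ := hmem
  exact ⟨T, h1, h2, by rw [hc]; exact h⟩

end AuxBasic

section AuxSClaw

variable {V : Type*} {G : SimpleGraph V}

lemma sClaw_adj_inl_inl {i j : Fin 3} {u v : V} :
    (sClaw G).Adj (Sum.inl (i, u)) (Sum.inl (j, v)) ↔ i = j ∧ G.Adj u v := by
  constructor
  · rintro ⟨hne, h | h⟩
    · exact h
    · exact ⟨h.1.symm, h.2.symm⟩
  · rintro ⟨rfl, h⟩
    exact ⟨by simp [h.ne], Or.inl ⟨rfl, h⟩⟩

lemma sClaw_adj_inl_v {i j : Fin 3} {u : V} :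
    (sClaw G).Adj (Sum.inl (i, u)) (Sum.inr (Sum.inl j)) ↔ i = j := by
  constructor
  · rintro ⟨hne, h | h⟩
    · exact h
    · exact h.elim
  · rintro rfl
    exact ⟨by simp, Or.inl rfl⟩

lemma sClaw_adj_v_w (i : Fin 3) (t : Unit) :
    (sClaw G).Adj (Sum.inr (Sum.inl i)) (Sum.inr (Sum.inr t)) :=
  ⟨by simp, Or.inl trivial⟩

lemma sClaw_not_adj_inl_w (p : Fin 3 × V) (t : Unit) :
    ¬ (sClaw G).Adj (Sum.inl p) (Sum.inr (Sum.inr t)) := by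
  rintro ⟨hne, h | h⟩ <;> exact h

lemma sClaw_not_adj_v_v (i j : Fin 3) :
    ¬ (sClaw G).Adj (Sum.inr (Sum.inl i)) (Sum.inr (Sum.inl j)) := by
  rintro ⟨hne, h | h⟩ <;> exact h

end AuxSClaw
section AuxWalk

open SimpleGraph

lemma walk_hits {V : Type*} {G : SimpleGraph V} (D : PathDecomp G) :
    ∀ {x y : V} (p : G.Walk x y) {i j k : Fin D.n}, i ≤ j → j ≤ k →
      x ∈ D.bag i → y ∈ D.bag k → ∃ z ∈ p.support, z ∈ D.bag j
  | _, _, SimpleGraph.Walk.nil, i, j, k, hij, hjk, hx, hy =>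
      ⟨_, by simp, D.interval _ i j k hij hjk hx hy⟩
  | _, _, SimpleGraph.Walk.cons hadj q, i, j, k, hij, hjk, hx, hy => by
      obtain ⟨m, hma, hmb⟩ := D.covers_edge hadj
      rcases le_total j m with hjm | hmj
      · exact ⟨_, by simp, D.interval _ i j m hij hjm hx hma⟩
      · obtain ⟨z, hz1, hz2⟩ := walk_hits D q hmj hjk hmb hy
        exact ⟨z, by simp [hz1], hz2⟩

lemma exists_le_sup {n k : ℕ} (f : Fin n → ℕ) (h : k + 1 ≤ Finset.univ.sup f) :
    ∃ i, k + 1 ≤ f i := by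
  by_contra hc
  push_neg at hc
  have : Finset.univ.sup f < k + 1 :=
    (Finset.sup_lt_iff (by exact Nat.succ_pos k : (⊥ : ℕ) < k + 1)).2 fun i _ => hc i
  exact absurd h this.not_ge

lemma median {α : Type*} [LinearOrder α] (f : Fin 3 → α)
    (hinj : ∀ a b : Fin 3, f a = f b → a = b) :
    ∃ a b c : Fin 3, f a < f b ∧ f b < f c := by
  have ne01 : f 0 ≠ f 1 := fun h => absurd (hinj 0 1 h) (by decide)
  have ne02 : f 0 ≠ f 2 := fun h => absurd (hinj 0 2 h) (by decide)
  have ne12 : f 1 ≠ f 2 := fun h => absurd (hinj 1 2 h) (by decide)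
  rcases ne01.lt_or_gt with h01 | h10 <;> rcases ne02.lt_or_gt with h02 | h20 <;>
    rcases ne12.lt_or_gt with h12 | h21
  · exact ⟨0, 1, 2, h01, h12⟩
  · exact ⟨0, 2, 1, h02, h21⟩
  · exact ⟨2, 0, 1, h20, h01⟩
  · exact ⟨2, 0, 1, h20, h01⟩
  · exact ⟨1, 0, 2, h10, h02⟩
  · exact ⟨1, 0, 2, h10, h02⟩
  · exact ⟨1, 2, 0, h12, h20⟩
  · exact ⟨2, 1, 0, h21, h10⟩

def trivDecomp {V : Type*} (G : SimpleGraph V) : PathDecomp G where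
  n := 1
  bag _ := Set.univ
  covers_vertex _ := ⟨0, trivial⟩
  covers_edge _ _ _ := ⟨0, trivial, trivial⟩
  interval _ _ _ _ _ _ _ _ := trivial

lemma one_le_alphaWidth {V : Type*} [Fintype V] [Nonempty V] {G : SimpleGraph V}
    (D : PathDecomp G) : 1 ≤ D.alphaWidth := by
  obtain ⟨v⟩ := ‹Nonempty V›
  obtain ⟨i, hi⟩ := D.covers_vertex v
  have h1 : 1 ≤ indepNumOn G (D.bag i) := by
    have h := le_indepNumOn (G := G) {v} (by simpa using hi)
      (by intro u hu v' hv'; simp only [Finset.mem_singleton] at hu hv'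
          subst hu; subst hv'; exact G.irrefl)
    simpa using h
  exact h1.trans (Finset.le_sup (f := fun i => indepNumOn G (D.bag i)) (Finset.mem_univ i))

end AuxWalk
section AuxConstruction

open SimpleGraph

variable {V : Type*} {G : SimpleGraph V}

/-- Extend the bags of a path decomposition to all of `ℕ` (empty outside range). -/
def dbag (D : PathDecomp G) (j : ℕ) : Set V :=
  if h : j < D.n then D.bag ⟨j, h⟩ else ∅

lemma mem_dbag {D : PathDecomp G} {j : ℕ} {u : V} :
    u ∈ dbag D j ↔ ∃ h : j < D.n, u ∈ D.bag ⟨j, h⟩ := by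
  unfold dbag
  split
  · simp_all
  · simp_all

lemma dbag_lt {D : PathDecomp G} {j : ℕ} {u : V} (h : u ∈ dbag D j) : j < D.n :=
  (mem_dbag.1 h).1

lemma dbag_interval {D : PathDecomp G} {a b c : ℕ} {u : V} (hab : a ≤ b) (hbc : b ≤ c)
    (ha : u ∈ dbag D a) (hc : u ∈ dbag D c) : u ∈ dbag D b := by
  obtain ⟨ha', hma⟩ := mem_dbag.1 ha
  obtain ⟨hc', hmc⟩ := mem_dbag.1 hc
  have hb' : b < D.n := lt_of_le_of_lt hbc hc'
  exact mem_dbag.2 ⟨hb', D.interval u ⟨a, ha'⟩ ⟨b, hb'⟩ ⟨c, hc'⟩ hab hbc hma hmc⟩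

/-- The bags of the path decomposition of `sClaw G` built from one of `G`. -/
def clawBag (D : PathDecomp G) (i : ℕ) : Set ((Fin 3 × V) ⊕ (Fin 3 ⊕ Unit)) := fun z =>
  match z with
  | Sum.inl (c, u) =>
      (c = 0 ∧ u ∈ dbag D i) ∨
      (c = 1 ∧ D.n + 1 ≤ i ∧ u ∈ dbag D (i - (D.n + 1))) ∨
      (c = 2 ∧ 2 * D.n + 2 ≤ i ∧ u ∈ dbag D (i - (2 * D.n + 2)))
  | Sum.inr (Sum.inl c) =>
      (c = 0 ∧ i ≤ D.n) ∨ (c = 1 ∧ D.n ≤ i ∧ i ≤ 2 * D.n) ∨ (c = 2 ∧ 2 * D.n + 1 ≤ i)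
  | Sum.inr (Sum.inr _) => D.n ≤ i ∧ i ≤ 2 * D.n + 1

lemma mem_clawBag_inl {D : PathDecomp G} {i : ℕ} {c : Fin 3} {u : V} :
    Sum.inl (c, u) ∈ clawBag D i ↔
      (c = 0 ∧ u ∈ dbag D i) ∨
      (c = 1 ∧ D.n + 1 ≤ i ∧ u ∈ dbag D (i - (D.n + 1))) ∨
      (c = 2 ∧ 2 * D.n + 2 ≤ i ∧ u ∈ dbag D (i - (2 * D.n + 2))) := Iff.rfl

lemma mem_clawBag_v {D : PathDecomp G} {i : ℕ} {c : Fin 3} :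
    Sum.inr (Sum.inl c) ∈ clawBag D i ↔
      (c = 0 ∧ i ≤ D.n) ∨ (c = 1 ∧ D.n ≤ i ∧ i ≤ 2 * D.n) ∨ (c = 2 ∧ 2 * D.n + 1 ≤ i) := Iff.rfl

lemma mem_clawBag_w {D : PathDecomp G} {i : ℕ} {t : Unit} :
    Sum.inr (Sum.inr t) ∈ clawBag D i ↔ D.n ≤ i ∧ i ≤ 2 * D.n + 1 := Iff.rfl

/-- A suitable common bag for a copy vertex and its apex. -/
lemma claw_index (D : PathDecomp G) (c : Fin 3) (j : Fin D.n) :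
    ∃ i : ℕ, i < 3 * D.n + 2 ∧ (∀ u, u ∈ D.bag j → Sum.inl (c, u) ∈ clawBag D i) ∧
      Sum.inr (Sum.inl c) ∈ clawBag D i := by
  have hj := j.isLt
  fin_cases c
  · exact ⟨j.val, by omega,
      fun u hu => Or.inl ⟨rfl, mem_dbag.2 ⟨j.isLt, by simpa using hu⟩⟩,
      Or.inl ⟨rfl, by omega⟩⟩
  · refine ⟨D.n + 1 + j.val, by omega, fun u hu => Or.inr (Or.inl ⟨rfl, by omega, ?_⟩),
      Or.inr (Or.inl ⟨rfl, by omega, by omega⟩)⟩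
    have h : D.n + 1 + j.val - (D.n + 1) = j.val := by omega
    rw [h]
    exact mem_dbag.2 ⟨j.isLt, by simpa using hu⟩
  · refine ⟨2 * D.n + 2 + j.val, by omega,
      fun u hu => Or.inr (Or.inr ⟨rfl, by omega, ?_⟩),
      Or.inr (Or.inr ⟨rfl, by omega⟩)⟩
    have h : 2 * D.n + 2 + j.val - (2 * D.n + 2) = j.val := by omega
    rw [h]
    exact mem_dbag.2 ⟨j.isLt, by simpa using hu⟩

/-- A suitable common bag for an apex vertex and the center `w`. -/
lemma claw_index_vw (D : PathDecomp G) (c : Fin 3) :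
    ∃ i : ℕ, i < 3 * D.n + 2 ∧ Sum.inr (Sum.inl c) ∈ clawBag D i ∧
      Sum.inr (Sum.inr ()) ∈ clawBag D i := by
  fin_cases c
  · exact ⟨D.n, by omega, Or.inl ⟨rfl, by omega⟩, ⟨by omega, by omega⟩⟩
  · exact ⟨D.n, by omega, Or.inr (Or.inl ⟨rfl, by omega, by omega⟩), ⟨by omega, by omega⟩⟩
  · exact ⟨2 * D.n + 1, by omega, Or.inr (Or.inr ⟨rfl, by omega⟩), ⟨by omega, by omega⟩⟩

/-- The path decomposition of `sClaw G` built from one of `G`. -/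
def clawDecomp (D : PathDecomp G) : PathDecomp (sClaw G) where
  n := 3 * D.n + 2
  bag i := clawBag D i.val
  covers_vertex := by
    rintro (⟨c, u⟩ | (c | t))
    · obtain ⟨j, hj⟩ := D.covers_vertex u
      obtain ⟨i, hi, h1, _⟩ := claw_index D c j
      exact ⟨⟨i, hi⟩, h1 u hj⟩
    · obtain ⟨i, hi, h1, _⟩ := claw_index_vw D c
      exact ⟨⟨i, hi⟩, h1⟩
    · cases t
      obtain ⟨i, hi, _, h2⟩ := claw_index_vw D 0
      exact ⟨⟨i, hi⟩, h2⟩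
  covers_edge := by
    rintro (⟨c, u⟩ | (c | t)) (⟨c', u'⟩ | (c' | t')) hadj
    · obtain ⟨rfl, huu'⟩ := sClaw_adj_inl_inl.1 hadj
      obtain ⟨j, hj, hj'⟩ := D.covers_edge huu'
      obtain ⟨i, hi, h1, _⟩ := claw_index D c j
      exact ⟨⟨i, hi⟩, h1 u hj, h1 u' hj'⟩
    · obtain rfl := sClaw_adj_inl_v.1 hadj
      obtain ⟨j, hj⟩ := D.covers_vertex u
      obtain ⟨i, hi, h1, h2⟩ := claw_index D c j
      exact ⟨⟨i, hi⟩, h1 u hj, h2⟩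
    · exact absurd hadj (sClaw_not_adj_inl_w _ _)
    · have hcc := sClaw_adj_inl_v.1 hadj.symm
      obtain ⟨j, hj⟩ := D.covers_vertex u'
      obtain ⟨i, hi, h1, h2⟩ := claw_index D c' j
      rw [hcc] at h2
      exact ⟨⟨i, hi⟩, h2, h1 u' hj⟩
    · exact absurd hadj (sClaw_not_adj_v_v _ _)
    · cases t'
      obtain ⟨i, hi, h1, h2⟩ := claw_index_vw D c
      exact ⟨⟨i, hi⟩, h1, h2⟩
    · exact absurd hadj.symm (sClaw_not_adj_inl_w _ _)
    · cases t
      obtain ⟨i, hi, h1, h2⟩ := claw_index_vw D c'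
      exact ⟨⟨i, hi⟩, h2, h1⟩
    · cases t; cases t'
      exact absurd rfl hadj.ne
  interval := by
    rintro (⟨c, u⟩ | (c | t)) i j k hij hjk hi hk
    · have hij' : (i : ℕ) ≤ j := hij
      have hjk' : (j : ℕ) ≤ k := hjk
      rcases hi with ⟨rfl, h1⟩ | ⟨rfl, h1a, h1b⟩ | ⟨rfl, h1a, h1b⟩ <;>
        rcases hk with ⟨hc, h2⟩ | ⟨hc, h2a, h2b⟩ | ⟨hc, h2a, h2b⟩ <;>
          first
          | exact absurd hc (by decide)
          | skip
      · exact Or.inl ⟨rfl, dbag_interval hij' hjk' h1 h2⟩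
      · exact Or.inr (Or.inl ⟨rfl, by omega,
          dbag_interval (by omega) (by omega) h1b h2b⟩)
      · exact Or.inr (Or.inr ⟨rfl, by omega,
          dbag_interval (by omega) (by omega) h1b h2b⟩)
    · have hij' : (i : ℕ) ≤ j := hij
      have hjk' : (j : ℕ) ≤ k := hjk
      rcases hi with ⟨rfl, h1⟩ | ⟨rfl, h1a, h1b⟩ | ⟨rfl, h1⟩ <;>
        rcases hk with ⟨hc, h2⟩ | ⟨hc, h2a, h2b⟩ | ⟨hc, h2⟩ <;>
          first
          | exact absurd hc (by decide)
          | skip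
      · exact Or.inl ⟨rfl, by omega⟩
      · exact Or.inr (Or.inl ⟨rfl, by omega, by omega⟩)
      · exact Or.inr (Or.inr ⟨rfl, by omega⟩)
    · have hij' : (i : ℕ) ≤ j := hij
      have hjk' : (j : ℕ) ≤ k := hjk
      obtain ⟨h1, h2⟩ := hi
      obtain ⟨h3, h4⟩ := hk
      exact ⟨by omega, by omega⟩

end AuxConstruction
section AuxWidth

open SimpleGraph

variable {V : Type*} [Fintype V] {G : SimpleGraph V}

lemma card_le_indep_copy {c : Fin 3} {S : Set V}
    (T : Finset ((Fin 3 × V) ⊕ (Fin 3 ⊕ Unit)))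
    (hT : ∀ z ∈ T, ∃ u, z = Sum.inl (c, u) ∧ u ∈ S)
    (hind : ∀ a ∈ T, ∀ b ∈ T, ¬ (sClaw G).Adj a b) :
    T.card ≤ indepNumOn G S := by
  classical
  rcases T.eq_empty_or_nonempty with rfl | ⟨z₀, hz₀⟩
  · simp
  obtain ⟨u₀, -, -⟩ := hT z₀ hz₀
  let g : (Fin 3 × V) ⊕ (Fin 3 ⊕ Unit) → V := fun z =>
    match z with
    | Sum.inl p => p.2
    | _ => u₀
  have hinj : Set.InjOn g T := by
    intro a ha b hb hab
    obtain ⟨u, rfl, -⟩ := hT a ha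
    obtain ⟨u', rfl, -⟩ := hT b hb
    simpa [g] using hab
  have hcard : (T.image g).card = T.card := Finset.card_image_of_injOn hinj
  rw [← hcard]
  apply le_indepNumOn
  · intro u hu
    simp only [Finset.coe_image, Set.mem_image, Finset.mem_coe] at hu
    obtain ⟨z, hz, rfl⟩ := hu
    obtain ⟨u', rfl, hu'⟩ := hT z hz
    exact hu'
  · intro u hu u' hu' hadj
    simp only [Finset.mem_image] at hu hu'
    obtain ⟨z, hz, rfl⟩ := hu
    obtain ⟨z', hz', rfl⟩ := hu'
    obtain ⟨a, rfl, -⟩ := hT z hz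
    obtain ⟨a', rfl, -⟩ := hT z' hz'
    exact hind _ hz _ hz' (sClaw_adj_inl_inl.2 ⟨rfl, by simpa [g] using hadj⟩)

lemma erase_card_aux {α : Type*} [DecidableEq α] (T : Finset α) (a : α) :
    T.card ≤ (T.erase a).card + 1 := by
  by_cases h : a ∈ T
  · rw [Finset.card_erase_of_mem h]
    omega
  · rw [Finset.erase_eq_of_notMem h]
    omega

lemma clawDecomp_alphaWidth {m : ℕ} (D : PathDecomp G)
    (hw : ∀ j : Fin D.n, indepNumOn G (D.bag j) ≤ m + 1) :
    (clawDecomp D).alphaWidth ≤ m + 2 := by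
  classical
  apply Finset.sup_le
  intro i _
  apply indepNumOn_le
  intro T hsub hind
  have hiv : (i : ℕ) < 3 * D.n + 2 := i.isLt
  rcases Nat.lt_or_ge (i : ℕ) D.n with hA | h1
  -- Case A : i < N, bag ⊆ copy 0 ∪ {v₀}
  · by_cases hv : (Sum.inr (Sum.inl 0) : (Fin 3 × V) ⊕ (Fin 3 ⊕ Unit)) ∈ T
    · have hsing : T ⊆ {Sum.inr (Sum.inl 0)} := by
        intro z hz
        have hzb := hsub hz
        rcases z with ⟨c, u⟩ | (c | t)
        · rcases mem_clawBag_inl.1 hzb with ⟨rfl, hu⟩ | ⟨rfl, hg, hu⟩ | ⟨rfl, hg, hu⟩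
          · exact absurd (sClaw_adj_inl_v.2 rfl) (hind _ hz _ hv)
          · omega
          · omega
        · rcases mem_clawBag_v.1 hzb with ⟨rfl, hg⟩ | ⟨rfl, hg, hg'⟩ | ⟨rfl, hg⟩
          · simp
          · omega
          · omega
        · obtain ⟨hg, hg'⟩ := mem_clawBag_w.1 hzb
          omega
      have hc1 := Finset.card_le_card hsing
      rw [Finset.card_singleton] at hc1
      omega
    · have hT' : ∀ z ∈ T, ∃ u, z = Sum.inl (0, u) ∧ u ∈ D.bag ⟨i, hA⟩ := by
        intro z hz
        have hzb := hsub hz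
        rcases z with ⟨c, u⟩ | (c | t)
        · rcases mem_clawBag_inl.1 hzb with ⟨rfl, hu⟩ | ⟨rfl, hg, hu⟩ | ⟨rfl, hg, hu⟩
          · obtain ⟨hlt, hu'⟩ := mem_dbag.1 hu
            exact ⟨u, rfl, hu'⟩
          · omega
          · omega
        · rcases mem_clawBag_v.1 hzb with ⟨rfl, hg⟩ | ⟨rfl, hg, hg'⟩ | ⟨rfl, hg⟩
          · exact absurd hz hv
          · omega
          · omega
        · obtain ⟨hg, hg'⟩ := mem_clawBag_w.1 hzb
          omega
      have := (card_le_indep_copy T hT' hind).trans (hw ⟨i, hA⟩)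
      omega
  · rcases Nat.eq_or_lt_of_le h1 with hB | h2
    -- Case B : i = N, bag ⊆ {v₀, v₁, w}
    · by_cases hwT : (Sum.inr (Sum.inr ()) : (Fin 3 × V) ⊕ (Fin 3 ⊕ Unit)) ∈ T
      · have hsing : T ⊆ {Sum.inr (Sum.inr ())} := by
          intro z hz
          have hzb := hsub hz
          rcases z with ⟨c, u⟩ | (c | t)
          · rcases mem_clawBag_inl.1 hzb with ⟨rfl, hu⟩ | ⟨rfl, hg, hu⟩ | ⟨rfl, hg, hu⟩ <;>
              [skip; omega; (have := dbag_lt hu; omega)]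
            have := dbag_lt hu
            omega
          · rcases mem_clawBag_v.1 hzb with ⟨rfl, hg⟩ | ⟨rfl, hg, hg'⟩ | ⟨rfl, hg⟩
            · exact absurd (sClaw_adj_v_w 0 ()) (hind _ hz _ hwT)
            · exact absurd (sClaw_adj_v_w 1 ()) (hind _ hz _ hwT)
            · omega
          · cases t
            simp
        have hc1 := Finset.card_le_card hsing
        rw [Finset.card_singleton] at hc1
        omega
      · have hpair : T ⊆ ({Sum.inr (Sum.inl 0), Sum.inr (Sum.inl 1)} :
            Finset ((Fin 3 × V) ⊕ (Fin 3 ⊕ Unit))) := by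
          intro z hz
          have hzb := hsub hz
          rcases z with ⟨c, u⟩ | (c | t)
          · rcases mem_clawBag_inl.1 hzb with ⟨rfl, hu⟩ | ⟨rfl, hg, hu⟩ | ⟨rfl, hg, hu⟩ <;>
              [(have := dbag_lt hu; omega); omega; (have := dbag_lt hu; omega)]
          · rcases mem_clawBag_v.1 hzb with ⟨rfl, hg⟩ | ⟨rfl, hg, hg'⟩ | ⟨rfl, hg⟩
            · simp
            · simp
            · omega
          · exact absurd (by cases t; exact hz) hwT
        have hc1 := Finset.card_le_card hpair
        have hc2 : ({Sum.inr (Sum.inl 0), Sum.inr (Sum.inl 1)} :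
            Finset ((Fin 3 × V) ⊕ (Fin 3 ⊕ Unit))).card ≤ 2 :=
          (Finset.card_insert_le _ _).trans (by simp)
        omega
    · rcases Nat.lt_or_ge (i : ℕ) (2 * D.n + 1) with hC | h3
      -- Case C : N < i ≤ 2N, bag ⊆ copy 1 ∪ {v₁, w}
      · have hj₁ : (i : ℕ) - (D.n + 1) < D.n := by omega
        by_cases hv : (Sum.inr (Sum.inl 1) : (Fin 3 × V) ⊕ (Fin 3 ⊕ Unit)) ∈ T
        · have hsing : T ⊆ {Sum.inr (Sum.inl 1)} := by
            intro z hz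
            have hzb := hsub hz
            rcases z with ⟨c, u⟩ | (c | t)
            · rcases mem_clawBag_inl.1 hzb with ⟨rfl, hu⟩ | ⟨rfl, hg, hu⟩ | ⟨rfl, hg, hu⟩
              · have := dbag_lt hu; omega
              · exact absurd (sClaw_adj_inl_v.2 rfl) (hind _ hz _ hv)
              · omega
            · rcases mem_clawBag_v.1 hzb with ⟨rfl, hg⟩ | ⟨rfl, hg, hg'⟩ | ⟨rfl, hg⟩
              · omega
              · simp
              · omega
            · cases t
              exact absurd (sClaw_adj_v_w 1 ()).symm (hind _ hz _ hv)
          have hc1 := Finset.card_le_card hsing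
          rw [Finset.card_singleton] at hc1
          omega
        · set T' := T.erase (Sum.inr (Sum.inr ())) with hT'def
          have hT' : ∀ z ∈ T', ∃ u, z = Sum.inl (1, u) ∧
              u ∈ D.bag ⟨(i : ℕ) - (D.n + 1), hj₁⟩ := by
            intro z hz'
            have hz := Finset.mem_of_mem_erase hz'
            have hzb := hsub hz
            rcases z with ⟨c, u⟩ | (c | t)
            · rcases mem_clawBag_inl.1 hzb with ⟨rfl, hu⟩ | ⟨rfl, hg, hu⟩ | ⟨rfl, hg, hu⟩
              · have := dbag_lt hu; omega
              · obtain ⟨hlt, hu'⟩ := mem_dbag.1 hu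
                exact ⟨u, rfl, hu'⟩
              · omega
            · rcases mem_clawBag_v.1 hzb with ⟨rfl, hg⟩ | ⟨rfl, hg, hg'⟩ | ⟨rfl, hg⟩
              · omega
              · exact absurd hz hv
              · omega
            · cases t
              exact absurd rfl (Finset.ne_of_mem_erase hz')
          have hind' : ∀ a ∈ T', ∀ b ∈ T', ¬ (sClaw G).Adj a b := fun a ha b hb =>
            hind a (Finset.mem_of_mem_erase ha) b (Finset.mem_of_mem_erase hb)
          have h5 := (card_le_indep_copy T' hT' hind').trans (hw _)
          have h6 := erase_card_aux T (Sum.inr (Sum.inr ()) : (Fin 3 × V) ⊕ (Fin 3 ⊕ Unit))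
          rw [← hT'def] at h6
          omega
      · rcases Nat.eq_or_lt_of_le h3 with hD | h4
        -- Case D : i = 2N+1, bag ⊆ {v₂, w}
        · by_cases hwT : (Sum.inr (Sum.inr ()) : (Fin 3 × V) ⊕ (Fin 3 ⊕ Unit)) ∈ T
          · have hsing : T ⊆ {Sum.inr (Sum.inr ())} := by
              intro z hz
              have hzb := hsub hz
              rcases z with ⟨c, u⟩ | (c | t)
              · rcases mem_clawBag_inl.1 hzb with ⟨rfl, hu⟩ | ⟨rfl, hg, hu⟩ | ⟨rfl, hg, hu⟩ <;>
                  [(have := dbag_lt hu; omega); (have := dbag_lt hu; omega); omega]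
              · rcases mem_clawBag_v.1 hzb with ⟨rfl, hg⟩ | ⟨rfl, hg, hg'⟩ | ⟨rfl, hg⟩
                · omega
                · omega
                · exact absurd (sClaw_adj_v_w 2 ()) (hind _ hz _ hwT)
              · cases t
                simp
            have hc1 := Finset.card_le_card hsing
            rw [Finset.card_singleton] at hc1
            omega
          · have hsing : T ⊆ {Sum.inr (Sum.inl 2)} := by
              intro z hz
              have hzb := hsub hz
              rcases z with ⟨c, u⟩ | (c | t)
              · rcases mem_clawBag_inl.1 hzb with ⟨rfl, hu⟩ | ⟨rfl, hg, hu⟩ | ⟨rfl, hg, hu⟩ <;>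
                  [(have := dbag_lt hu; omega); (have := dbag_lt hu; omega); omega]
              · rcases mem_clawBag_v.1 hzb with ⟨rfl, hg⟩ | ⟨rfl, hg, hg'⟩ | ⟨rfl, hg⟩
                · omega
                · omega
                · simp
              · exact absurd (by cases t; exact hz) hwT
            have hc1 := Finset.card_le_card hsing
            rw [Finset.card_singleton] at hc1
            omega
        -- Case E : 2N+2 ≤ i, bag ⊆ copy 2 ∪ {v₂}
        · have hj₂ : (i : ℕ) - (2 * D.n + 2) < D.n := by omega
          by_cases hv : (Sum.inr (Sum.inl 2) : (Fin 3 × V) ⊕ (Fin 3 ⊕ Unit)) ∈ T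
          · have hsing : T ⊆ {Sum.inr (Sum.inl 2)} := by
              intro z hz
              have hzb := hsub hz
              rcases z with ⟨c, u⟩ | (c | t)
              · rcases mem_clawBag_inl.1 hzb with ⟨rfl, hu⟩ | ⟨rfl, hg, hu⟩ | ⟨rfl, hg, hu⟩
                · have := dbag_lt hu; omega
                · have := dbag_lt hu; omega
                · exact absurd (sClaw_adj_inl_v.2 rfl) (hind _ hz _ hv)
              · rcases mem_clawBag_v.1 hzb with ⟨rfl, hg⟩ | ⟨rfl, hg, hg'⟩ | ⟨rfl, hg⟩
                · omega
                · omega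
                · simp
              · obtain ⟨hg, hg'⟩ := mem_clawBag_w.1 hzb
                omega
            have hc1 := Finset.card_le_card hsing
            rw [Finset.card_singleton] at hc1
            omega
          · have hT' : ∀ z ∈ T, ∃ u, z = Sum.inl (2, u) ∧
                u ∈ D.bag ⟨(i : ℕ) - (2 * D.n + 2), hj₂⟩ := by
              intro z hz
              have hzb := hsub hz
              rcases z with ⟨c, u⟩ | (c | t)
              · rcases mem_clawBag_inl.1 hzb with ⟨rfl, hu⟩ | ⟨rfl, hg, hu⟩ | ⟨rfl, hg, hu⟩
                · have := dbag_lt hu; omega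
                · have := dbag_lt hu; omega
                · obtain ⟨hlt, hu'⟩ := mem_dbag.1 hu
                  exact ⟨u, rfl, hu'⟩
              · rcases mem_clawBag_v.1 hzb with ⟨rfl, hg⟩ | ⟨rfl, hg, hg'⟩ | ⟨rfl, hg⟩
                · omega
                · omega
                · exact absurd hz hv
              · obtain ⟨hg, hg'⟩ := mem_clawBag_w.1 hzb
                omega
            have := (card_le_indep_copy T hT' hind).trans (hw _)
            omega

end AuxWidth
section AuxLower

open SimpleGraph

variable {V : Type*} [Fintype V] {G : SimpleGraph V}

/-- Restriction of a path decomposition of `sClaw G` to the `c`-th copy of `G`. -/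
def restrictDecomp (D : PathDecomp (sClaw G)) (c : Fin 3) : PathDecomp G where
  n := D.n
  bag j := {v | Sum.inl (c, v) ∈ D.bag j}
  covers_vertex v := D.covers_vertex (Sum.inl (c, v))
  covers_edge u v h := D.covers_edge (sClaw_adj_inl_inl.2 ⟨rfl, h⟩)
  interval v i j k hij hjk hi hk := D.interval _ i j k hij hjk hi hk

lemma lower_step {k : ℕ} (hIH : ∀ D' : PathDecomp G, k + 1 ≤ D'.alphaWidth)
    (D : PathDecomp (sClaw G)) : k + 2 ≤ D.alphaWidth := by
  classical
  by_contra hcon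
  push_neg at hcon
  have hbag : ∀ i, indepNumOn (sClaw G) (D.bag i) ≤ k + 1 := by
    intro i
    have h := Finset.le_sup (f := fun i => indepNumOn (sClaw G) (D.bag i)) (Finset.mem_univ i)
    have : D.alphaWidth ≤ k + 1 := by omega
    exact h.trans this
  -- for each copy, a bag with a large independent set inside the copy
  have hres : ∀ c : Fin 3, ∃ (j : Fin D.n) (T : Finset V),
      (∀ u ∈ T, Sum.inl (c, u) ∈ D.bag j) ∧ (∀ u ∈ T, ∀ v ∈ T, ¬ G.Adj u v) ∧
      k + 1 ≤ T.card := by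
    intro c
    obtain ⟨j, hj⟩ := exists_le_sup _ (hIH (restrictDecomp D c))
    obtain ⟨T, h1, h2, h3⟩ := exists_indep_of_le hj
    exact ⟨j, T, fun u hu => h1 hu, h2, h3⟩
  choose j T hT hTind hTcard using hres
  -- each such bag is "pure": contained in its copy plus its apex
  have hpure : ∀ c, ∀ z ∈ D.bag (j c), (∃ u, z = Sum.inl (c, u)) ∨ z = Sum.inr (Sum.inl c) := by
    intro c z hz
    by_contra hzc
    push_neg at hzc
    obtain ⟨hz1, hz2⟩ := hzc
    set T' : Finset ((Fin 3 × V) ⊕ (Fin 3 ⊕ Unit)) :=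
      (T c).image (fun u => Sum.inl (c, u)) with hT'def
    have hmemT' : ∀ y, y ∈ T' ↔ ∃ u ∈ T c, Sum.inl (c, u) = y := by
      intro y
      simp [hT'def]
    have hzT' : z ∉ T' := by
      rw [hmemT']
      rintro ⟨u, hu, rfl⟩
      exact hz1 u rfl
    have hnadj : ∀ u : V, ¬ (sClaw G).Adj z (Sum.inl (c, u)) := by
      intro u hadj
      rcases z with ⟨c', u'⟩ | (c' | t)
      · obtain ⟨rfl, -⟩ := sClaw_adj_inl_inl.1 hadj
        exact hz1 u' rfl
      · have := sClaw_adj_inl_v.1 hadj.symm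
        exact hz2 (by rw [this])
      · exact sClaw_not_adj_inl_w _ _ hadj.symm
    have hsub : ↑(insert z T') ⊆ D.bag (j c) := by
      intro y hy
      simp only [Finset.coe_insert, Set.mem_insert_iff] at hy
      rcases hy with rfl | hy
      · exact hz
      · rw [Finset.mem_coe, hmemT'] at hy
        obtain ⟨u, hu, rfl⟩ := hy
        exact hT c u hu
    have hind' : ∀ a ∈ insert z T', ∀ b ∈ insert z T', ¬ (sClaw G).Adj a b := by
      intro a ha b hb hadj
      rw [Finset.mem_insert] at ha hb
      rcases ha with rfl | ha <;> rcases hb with rfl | hb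
      · exact hadj.ne rfl
      · rw [hmemT'] at hb
        obtain ⟨u, hu, rfl⟩ := hb
        exact hnadj u hadj
      · rw [hmemT'] at ha
        obtain ⟨u, hu, rfl⟩ := ha
        exact hnadj u hadj.symm
      · rw [hmemT'] at ha hb
        obtain ⟨u, hu, rfl⟩ := ha
        obtain ⟨u', hu', rfl⟩ := hb
        exact hTind c u hu u' hu' (sClaw_adj_inl_inl.1 hadj).2
    have hbig := le_indepNumOn (insert z T') hsub hind'
    have hcard : (insert z T').card = T'.card + 1 := Finset.card_insert_of_notMem hzT'
    have hcard' : T'.card = (T c).card :=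
      Finset.card_image_of_injective _ (fun a b hab => by
        simpa using hab)
    have := hbag (j c)
    have := hTcard c
    omega
  -- the three bags are distinct
  have hjinj : ∀ a b : Fin 3, j a = j b → a = b := by
    intro a b hab
    by_contra hne
    obtain ⟨u₀, hu₀⟩ := Finset.card_pos.1 (by have := hTcard a; omega : 0 < (T a).card)
    have hz : Sum.inl (a, u₀) ∈ D.bag (j b) := hab ▸ hT a u₀ hu₀
    rcases hpure b _ hz with ⟨u, hu⟩ | hu
    · injection hu with h
      injection h with h1 h2
      exact hne h1
    · simp at hu
  obtain ⟨a, b, c, hab, hbc⟩ := median j hjinj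
  obtain ⟨x₀, hx₀⟩ := Finset.card_pos.1 (by have := hTcard a; omega : 0 < (T a).card)
  obtain ⟨y₀, hy₀⟩ := Finset.card_pos.1 (by have := hTcard c; omega : 0 < (T c).card)
  let p : (sClaw G).Walk (Sum.inl (a, x₀)) (Sum.inl (c, y₀)) :=
    Walk.cons (sClaw_adj_inl_v.2 rfl)
      (Walk.cons (sClaw_adj_v_w a ())
        (Walk.cons (sClaw_adj_v_w c ()).symm
          (Walk.cons (sClaw_adj_inl_v.2 rfl).symm Walk.nil)))
  obtain ⟨z, hzsup, hzbag⟩ :=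
    walk_hits D p hab.le hbc.le (hT a x₀ hx₀) (hT c y₀ hy₀)
  have hane : a ≠ b := fun h => absurd (h ▸ rfl) hab.ne
  have hcne : c ≠ b := fun h => absurd (h ▸ rfl) hbc.ne'
  have hp := hpure b z hzbag
  simp only [p, Walk.support_cons, Walk.support_nil, List.mem_cons,
    List.not_mem_nil, or_false] at hzsup
  rcases hzsup with rfl | rfl | rfl | rfl | rfl
  · rcases hp with ⟨u, hu⟩ | hu
    · injection hu with h
      injection h with h1 h2
      exact hane h1
    · simp at hu
  · rcases hp with ⟨u, hu⟩ | hu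
    · simp at hu
    · injection hu with h
      injection h with h1
      exact hane h1
  · rcases hp with ⟨u, hu⟩ | hu
    · simp at hu
    · injection hu with h
      simp at h
  · rcases hp with ⟨u, hu⟩ | hu
    · simp at hu
    · injection hu with h
      injection h with h1
      exact hcne h1
  · rcases hp with ⟨u, hu⟩ | hu
    · injection hu with h
      injection h with h1 h2
      exact hcne h1
    · simp at hu

end AuxLower
section Main

open SimpleGraph

lemma alphaPathwidth_Sgraph : ∀ m : ℕ, alphaPathwidth (Sgraph m) = m + 1 := by
  intro m
  induction m with
  | zero =>
    apply le_antisymm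
    · have hmem : (trivDecomp (Sgraph 0)).alphaWidth ∈
          {w | ∃ D : PathDecomp (Sgraph 0), D.alphaWidth = w} := ⟨trivDecomp _, rfl⟩
      refine (Nat.sInf_le hmem).trans ?_
      apply Finset.sup_le
      intro i _
      apply indepNumOn_le
      intro T _ _
      have hsub : Subsingleton (SType 0) := inferInstanceAs (Subsingleton Unit)
      exact Finset.card_le_one.2 fun a _ b _ => Subsingleton.elim a b
    · refine le_csInf ⟨_, ⟨trivDecomp _, rfl⟩⟩ ?_
      rintro w ⟨D, rfl⟩
      exact one_le_alphaWidth D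
  | succ m ih =>
    have hlow : ∀ D' : PathDecomp (Sgraph m), m + 1 ≤ D'.alphaWidth := by
      intro D'
      have h2 : alphaPathwidth (Sgraph m) ≤ D'.alphaWidth := Nat.sInf_le ⟨D', rfl⟩
      rw [ih] at h2
      exact h2
    obtain ⟨D₀, hD₀⟩ : ∃ D' : PathDecomp (Sgraph m), D'.alphaWidth = m + 1 := by
      have hmem : alphaPathwidth (Sgraph m) ∈
          {w | ∃ D : PathDecomp (Sgraph m), D.alphaWidth = w} :=
        Nat.sInf_mem ⟨_, ⟨trivDecomp _, rfl⟩⟩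
      rw [ih] at hmem
      exact hmem
    have hup : (clawDecomp D₀).alphaWidth ≤ m + 2 := by
      apply clawDecomp_alphaWidth
      intro jj
      exact (Finset.le_sup (f := fun i => indepNumOn (Sgraph m) (D₀.bag i))
        (Finset.mem_univ jj)).trans (le_of_eq hD₀)
    apply le_antisymm
    · have hmem2 : (clawDecomp D₀).alphaWidth ∈
          {w | ∃ D : PathDecomp (Sgraph (m + 1)), D.alphaWidth = w} := ⟨clawDecomp D₀, rfl⟩
      exact (Nat.sInf_le hmem2).trans hup
    · refine le_csInf ⟨_, ⟨trivDecomp _, rfl⟩⟩ ?_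
      rintro w ⟨D, rfl⟩
      exact lower_step hlow D

end Main

theorem stmt6 (n : ℕ) (hn : 1 ≤ n) : alphaPathwidth (Sgraph (n - 1)) = n := by
  rw [alphaPathwidth_Sgraph (n - 1)]
  omega
end Awesome
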